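/- arXiv:2002.01013 — 5 statements merged into one kernel-verified Lean document; each statement's English description precedes it below -/
import Mathlib

section
/- Let d ≥ 1, σ > 0, and let P be a Borel probability measure on ℝ^d satisfying ∫_{ℝ^d} √(Var_P(φ_σ(x−·))) dx < ∞. Let X_1,…,X_n be i.i.d. with law P and let P_n be the empirical measure. Then for every n ≥ 1, E[δ_TV(P_n∗N_σ, P∗N_σ)] ≤ (1/(2√n)) ∫_{ℝ^d} √(Var_P(φ_σ(x−·))) dx. -/
/-!
Both smoothed measures have Lebesgue densities `p_Q(x) = ∫ φ_σ(x - y) dQ(y)` of equal mass, so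
their total variation distance is half the `L¹` distance of the densities. For fixed `x`,
`p_{P_n}(x)` is the empirical mean of the i.i.d. bounded variables `φ_σ(x - X_i)`, whose mean is
`p_P(x)`; hence `E|p_{P_n}(x) - p_P(x)| ≤ √(Var_P(φ_σ(x - ·)) / n)` by `L¹ ≤ L²`. Integrating in
`x` and exchanging the integrals gives the bound.
-/

open MeasureTheory ProbabilityTheory Real Filter
open scoped ENNReal NNReal

/-- The isotropic Gaussian density `φ_σ` on `ℝ^d`. -/
noncomputable def gaussDensity (d : ℕ) (σ : ℝ) (x : EuclideanSpace ℝ (Fin d)) : ℝ :=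
  (2 * π * σ ^ 2) ^ (-(d : ℝ) / 2) * Real.exp (-‖x‖ ^ 2 / (2 * σ ^ 2))

/-- The isotropic Gaussian measure `N_σ = N(0, σ² I_d)` on `ℝ^d`. -/
noncomputable def gaussMeasure (d : ℕ) (σ : ℝ) : Measure (EuclideanSpace ℝ (Fin d)) :=
  volume.withDensity fun x => ENNReal.ofReal (gaussDensity d σ x)

/-- Convolution of two measures. -/
noncomputable def mconv {α : Type*} [MeasurableSpace α] [Add α] (μ ν : Measure α) : Measure α :=
  (μ.prod ν).map fun p => p.1 + p.2

/-- Total variation distance: supremum over Borel sets of `|μ(A) − ν(A)|`. -/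
noncomputable def tvDist {α : Type*} [MeasurableSpace α] (μ ν : Measure α) : ℝ :=
  ⨆ A : {s : Set α // MeasurableSet s}, |(μ A).toReal - (ν A).toReal|

/-- Empirical measure `P_n = n⁻¹ ∑_{i<n} δ_{X_i(ω)}`. -/
noncomputable def empMeasure {Ω : Type*} [MeasurableSpace Ω] {d : ℕ}
    (X : ℕ → Ω → EuclideanSpace ℝ (Fin d)) (n : ℕ) (ω : Ω) :
    Measure (EuclideanSpace ℝ (Fin d)) :=
  (n : ℝ≥0∞)⁻¹ • ∑ i ∈ Finset.range n, Measure.dirac (X i ω)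

section Convolution

variable {G : Type*} [MeasurableSpace G] [AddCommGroup G] [MeasurableAdd₂ G] [MeasurableNeg G]
  {ν : Measure G} [ν.IsAddLeftInvariant] [SFinite ν]

theorem mconv_withDensity (Q : Measure G) [SFinite Q] {g : G → ℝ≥0∞} (hg : Measurable g) :
    mconv Q (ν.withDensity g) = ν.withDensity fun x => ∫⁻ y, g (x - y) ∂Q := by
  have hgsub : Measurable fun p : G × G => g (p.1 - p.2) := by fun_prop
  refine Measure.ext_of_lintegral _ fun φ hφ => ?_
  -- `mconv` is definitionally Mathlib's `Measure.conv`.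
  change ∫⁻ z, φ z ∂(Q ∗ ν.withDensity g) = _
  rw [Measure.lintegral_conv hφ,
    lintegral_withDensity_eq_lintegral_mul _ hgsub.lintegral_prod_right' hφ]
  calc ∫⁻ y, ∫⁻ z, φ (y + z) ∂ν.withDensity g ∂Q
      = ∫⁻ y, ∫⁻ x, g (x - y) * φ x ∂ν ∂Q := by
        refine lintegral_congr fun y => ?_
        rw [lintegral_withDensity_eq_lintegral_mul _ hg (by fun_prop),
          ← lintegral_add_left_eq_self (fun x => g (x - y) * φ x) y]
        simp only [Pi.mul_apply, add_sub_cancel_left]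
    _ = ∫⁻ x, (∫⁻ y, g (x - y) ∂Q) * φ x ∂ν := by
        rw [lintegral_lintegral_swap (by fun_prop)]
        exact lintegral_congr fun x => lintegral_mul_const _ (by fun_prop)

theorem integrable_prod_comp_sub {φ : G → ℝ} (hφm : Measurable φ) (hφ : Integrable φ ν)
    (Q : Measure G) [IsFiniteMeasure Q] :
    Integrable (fun p : G × G => φ (p.1 - p.2)) (ν.prod Q) := by
  have hm : Measurable fun p : G × G => φ (p.1 - p.2) := by fun_prop
  refine (integrable_prod_iff' hm.aestronglyMeasurable).2
    ⟨ae_of_all _ fun y => hφ.comp_sub_right y, ?_⟩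
  simp only [integral_sub_right_eq_self fun x => ‖φ x‖]
  exact integrable_const _

theorem integral_integral_comp_sub {φ : G → ℝ} (hφm : Measurable φ) (hφ : Integrable φ ν)
    (Q : Measure G) [IsProbabilityMeasure Q] :
    ∫ x, ∫ y, φ (x - y) ∂Q ∂ν = ∫ x, φ x ∂ν := by
  rw [integral_integral_swap (integrable_prod_comp_sub hφm hφ Q)]
  simp only [integral_sub_right_eq_self, integral_const, probReal_univ, one_smul]

end Convolution

section TotalVariation

variable {α : Type*} [MeasurableSpace α] {ρ : Measure α}

theorem abs_setIntegral_le_half_integral_abs {h : α → ℝ} (hh : Integrable h ρ)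
    (hh0 : ∫ a, h a ∂ρ = 0) {A : Set α} (hA : MeasurableSet A) :
    |∫ a in A, h a ∂ρ| ≤ 2⁻¹ * ∫ a, |h a| ∂ρ := by
  -- `∫ h = 0` makes the integrals of `h` over `A` and `Aᶜ` opposite.
  have hcompl := integral_add_compl hA hh
  have habs := integral_add_compl hA hh.abs
  have hAbound := abs_integral_le_integral_abs (f := h) (μ := ρ.restrict A)
  have hAcbound := abs_integral_le_integral_abs (f := h) (μ := ρ.restrict Aᶜ)
  rw [abs_le] at hAbound hAcbound ⊢
  constructor <;> linarith [hAbound.1, hAbound.2, hAcbound.1, hAcbound.2]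

theorem tvDist_withDensity_ofReal_le {f g : α → ℝ} (hf : Integrable f ρ) (hg : Integrable g ρ)
    (hf0 : 0 ≤ f) (hg0 : 0 ≤ g) (hfg : ∫ a, f a ∂ρ = ∫ a, g a ∂ρ) :
    tvDist (ρ.withDensity fun a => .ofReal (f a)) (ρ.withDensity fun a => .ofReal (g a))
      ≤ 2⁻¹ * ∫ a, |f a - g a| ∂ρ := by
  have hmeasure {u : α → ℝ} (hu : Integrable u ρ) (hu0 : 0 ≤ u) {A : Set α}
      (hA : MeasurableSet A) :
      ((ρ.withDensity fun a => .ofReal (u a)) A).toReal = ∫ a in A, u a ∂ρ := by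
    rw [withDensity_apply _ hA, ← ofReal_integral_eq_lintegral_ofReal hu.restrict
      (ae_of_all _ hu0), ENNReal.toReal_ofReal (setIntegral_nonneg hA fun a _ => hu0 a)]
  refine ciSup_le fun ⟨A, hA⟩ => ?_
  rw [hmeasure hf hf0 hA, hmeasure hg hg0 hA, ← integral_sub hf.restrict hg.restrict]
  exact abs_setIntegral_le_half_integral_abs (h := fun a => f a - g a) (hf.sub hg)
    (by rw [integral_sub hf hg, hfg, sub_self]) hA

end TotalVariation

theorem lintegral_abs_sub_integral_le_sqrt_variance {Ω : Type*} [MeasurableSpace Ω]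
    {μ : Measure Ω} [IsProbabilityMeasure μ] {Y : Ω → ℝ} (hY : MemLp Y 2 μ) :
    ∫⁻ ω, .ofReal |Y ω - μ[Y]| ∂μ ≤ .ofReal √(Var[Y; μ]) := by
  have hcentered : AEStronglyMeasurable (fun ω => Y ω - μ[Y]) μ :=
    hY.aestronglyMeasurable.sub aestronglyMeasurable_const
  calc ∫⁻ ω, .ofReal |Y ω - μ[Y]| ∂μ
      = eLpNorm (fun ω => Y ω - μ[Y]) 1 μ := by
        simp only [eLpNorm_one_eq_lintegral_enorm, Real.enorm_eq_ofReal_abs]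
    _ ≤ eLpNorm (fun ω => Y ω - μ[Y]) 2 μ :=
        eLpNorm_le_eLpNorm_of_exponent_le one_le_two hcentered
    _ = eVar[Y; μ] ^ (2⁻¹ : ℝ) := by
        rw [eLpNorm_eq_lintegral_rpow_enorm_toReal two_ne_zero ENNReal.ofNat_ne_top, evariance]
        simp only [ENNReal.toReal_ofNat, one_div, ENNReal.rpow_two]
    _ = .ofReal √(Var[Y; μ]) := by
        rw [← hY.ofReal_variance_eq, ENNReal.ofReal_rpow_of_nonneg (variance_nonneg _ _)
          (by norm_num), Real.sqrt_eq_rpow, one_div]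

section EmpiricalMean

variable {Ω E : Type*} [MeasurableSpace Ω] [MeasurableSpace E] {μ : Measure Ω} {P : Measure E}
  {X : ℕ → Ω → E} {φ : E → ℝ}

theorem integral_empiricalMean (hX : ∀ i, MeasurePreserving (X i) μ P) (hφ : Integrable φ P)
    {n : ℕ} (hn : n ≠ 0) :
    μ[fun ω => (n : ℝ)⁻¹ * ∑ i ∈ Finset.range n, φ (X i ω)] = ∫ y, φ y ∂P := by
  have hmean (i : ℕ) : ∫ ω, φ (X i ω) ∂μ = ∫ y, φ y ∂P := by
    rw [← (hX i).map_eq, integral_map (hX i).aemeasurable ((hX i).map_eq ▸ hφ.1)]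
  rw [integral_const_mul, integral_finsetSum (f := fun i ω => φ (X i ω)) _
    fun i _ => (hX i).integrable_comp_of_integrable hφ]
  simp only [hmean, Finset.sum_const, Finset.card_range, nsmul_eq_mul]
  field_simp

theorem variance_empiricalMean (hX : ∀ i, MeasurePreserving (X i) μ P) (hindep : iIndepFun X μ)
    (hφm : Measurable φ) (hφ : MemLp φ 2 P) (n : ℕ) :
    Var[fun ω => (n : ℝ)⁻¹ * ∑ i ∈ Finset.range n, φ (X i ω); μ] = Var[φ; P] / n := by
  have hvar (i : ℕ) : Var[φ ∘ X i; μ] = Var[φ; P] := by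
    rw [← variance_map ((hX i).map_eq ▸ hφm.aemeasurable) (hX i).aemeasurable, (hX i).map_eq]
  have hpair : Set.Pairwise ↑(Finset.range n) fun i j => IndepFun (φ ∘ X i) (φ ∘ X j) μ :=
    fun i _ j _ hij => (hindep.indepFun hij).comp hφm hφm
  have hsum : (fun ω => ∑ i ∈ Finset.range n, φ (X i ω)) = ∑ i ∈ Finset.range n, φ ∘ X i := by
    ext ω; simp
  rw [variance_const_mul, hsum,
    IndepFun.variance_sum (fun i _ => hφ.comp_measurePreserving (hX i)) hpair]
  simp only [hvar, Finset.sum_const, Finset.card_range, nsmul_eq_mul]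
  rcases eq_or_ne n 0 with rfl | hn
  · simp
  · field_simp

theorem lintegral_abs_empiricalMean_sub_le [IsProbabilityMeasure μ] [IsProbabilityMeasure P]
    (hX : ∀ i, MeasurePreserving (X i) μ P) (hindep : iIndepFun X μ) (hφm : Measurable φ)
    (hφ : MemLp φ 2 P) {n : ℕ} (hn : n ≠ 0) :
    ∫⁻ ω, .ofReal |(n : ℝ)⁻¹ * ∑ i ∈ Finset.range n, φ (X i ω) - ∫ y, φ y ∂P| ∂μ
      ≤ .ofReal (√(Var[φ; P]) / √n) := by
  have hmean : MemLp (fun ω => (n : ℝ)⁻¹ * ∑ i ∈ Finset.range n, φ (X i ω)) 2 μ :=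
    (memLp_finsetSum _ fun i _ => hφ.comp_measurePreserving (hX i)).const_mul _
  have := lintegral_abs_sub_integral_le_sqrt_variance hmean
  rwa [integral_empiricalMean hX (hφ.integrable one_le_two) hn,
    variance_empiricalMean hX hindep hφm hφ, Real.sqrt_div (variance_nonneg _ _)] at this

end EmpiricalMean

section Gaussian

variable {d : ℕ} {σ : ℝ}

theorem gaussDensity_nonneg (x : EuclideanSpace ℝ (Fin d)) : 0 ≤ gaussDensity d σ x := by
  unfold gaussDensity; positivity

theorem gaussDensity_le (x : EuclideanSpace ℝ (Fin d)) :
    gaussDensity d σ x ≤ (2 * π * σ ^ 2) ^ (-(d : ℝ) / 2) := by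
  refine mul_le_of_le_one_right (by positivity) (Real.exp_le_one_iff.2 ?_)
  exact div_nonpos_of_nonpos_of_nonneg (neg_nonpos.2 (by positivity)) (by positivity)

@[fun_prop]
theorem continuous_gaussDensity : Continuous (gaussDensity d σ) := by
  unfold gaussDensity; fun_prop

@[fun_prop]
theorem measurable_gaussDensity : Measurable (gaussDensity d σ) :=
  continuous_gaussDensity.measurable

theorem integrable_gaussDensity (hσ : 0 < σ) : Integrable (gaussDensity d σ) := by
  have hb : 0 < (2 * σ ^ 2)⁻¹ := by positivity
  have hexp : Integrable fun x : EuclideanSpace ℝ (Fin d) => rexp (-(2 * σ ^ 2)⁻¹ * ‖x‖ ^ 2) := by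
    refine (GaussianFourier.integrable_cexp_neg_mul_sq_norm_add (b := ((2 * σ ^ 2)⁻¹ : ℝ))
      (by simpa only [Complex.ofReal_re] using hb) 0 0).norm.congr (ae_of_all _ fun x => ?_)
    simp only [Complex.norm_exp, zero_mul, add_zero, neg_mul, Complex.neg_re,
      ← Complex.ofReal_pow, ← Complex.ofReal_mul, Complex.ofReal_re]
  refine (hexp.const_mul ((2 * π * σ ^ 2) ^ (-(d : ℝ) / 2))).congr (ae_of_all _ fun x => ?_)
  simp only [gaussDensity, div_eq_inv_mul, neg_mul, mul_neg]

end Gaussian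

section GaussianSmoothing

variable {d : ℕ} {σ : ℝ}

noncomputable def gaussConvDensity (d : ℕ) (σ : ℝ) (Q : Measure (EuclideanSpace ℝ (Fin d)))
    (x : EuclideanSpace ℝ (Fin d)) : ℝ :=
  ∫ y, gaussDensity d σ (x - y) ∂Q

theorem gaussConvDensity_nonneg (Q : Measure (EuclideanSpace ℝ (Fin d)))
    (x : EuclideanSpace ℝ (Fin d)) :
    0 ≤ gaussConvDensity d σ Q x :=
  integral_nonneg fun _ => gaussDensity_nonneg _

@[fun_prop]
theorem measurable_gaussConvDensity (Q : Measure (EuclideanSpace ℝ (Fin d))) [SFinite Q] :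
    Measurable (gaussConvDensity d σ Q) :=
  (show StronglyMeasurable fun p : _ × _ => gaussDensity d σ (p.1 - p.2) from
    (by fun_prop : Continuous _).stronglyMeasurable).integral_prod_right'.measurable

theorem memLp_gaussDensity_sub (Q : Measure (EuclideanSpace ℝ (Fin d))) [IsFiniteMeasure Q]
    (x : EuclideanSpace ℝ (Fin d)) (p : ℝ≥0∞) : MemLp (fun y => gaussDensity d σ (x - y)) p Q :=
  memLp_of_bounded (ae_of_all _ fun y => ⟨gaussDensity_nonneg _, gaussDensity_le _⟩)
    (by fun_prop) p

theorem mconv_gaussMeasure (Q : Measure (EuclideanSpace ℝ (Fin d))) [IsFiniteMeasure Q] :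
    mconv Q (gaussMeasure d σ) =
      volume.withDensity fun x => .ofReal (gaussConvDensity d σ Q x) := by
  rw [gaussMeasure, mconv_withDensity Q (by fun_prop)]
  congr 1; ext x
  rw [gaussConvDensity, ofReal_integral_eq_lintegral_ofReal
    ((memLp_gaussDensity_sub Q x 1).integrable le_rfl)
    (ae_of_all _ fun _ => gaussDensity_nonneg _)]

theorem integrable_gaussConvDensity (hσ : 0 < σ) (Q : Measure (EuclideanSpace ℝ (Fin d)))
    [IsFiniteMeasure Q] : Integrable (gaussConvDensity d σ Q) :=
  (integrable_prod_comp_sub measurable_gaussDensity (integrable_gaussDensity hσ) Q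
    ).integral_prod_left

theorem integral_gaussConvDensity (hσ : 0 < σ) (Q : Measure (EuclideanSpace ℝ (Fin d)))
    [IsProbabilityMeasure Q] : ∫ x, gaussConvDensity d σ Q x = ∫ x, gaussDensity d σ x :=
  integral_integral_comp_sub measurable_gaussDensity (integrable_gaussDensity hσ) Q

theorem ofReal_tvDist_mconv_gaussMeasure_le (hσ : 0 < σ)
    (Q₁ Q₂ : Measure (EuclideanSpace ℝ (Fin d))) [IsProbabilityMeasure Q₁]
    [IsProbabilityMeasure Q₂] :
    .ofReal (tvDist (mconv Q₁ (gaussMeasure d σ)) (mconv Q₂ (gaussMeasure d σ)))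
      ≤ 2⁻¹ * ∫⁻ x, .ofReal |gaussConvDensity d σ Q₁ x - gaussConvDensity d σ Q₂ x| := by
  have hint : Integrable fun x => gaussConvDensity d σ Q₁ x - gaussConvDensity d σ Q₂ x :=
    (integrable_gaussConvDensity hσ Q₁).sub (integrable_gaussConvDensity hσ Q₂)
  rw [mconv_gaussMeasure, mconv_gaussMeasure]
  refine (ENNReal.ofReal_le_ofReal <| tvDist_withDensity_ofReal_le
    (integrable_gaussConvDensity hσ Q₁) (integrable_gaussConvDensity hσ Q₂)
    (gaussConvDensity_nonneg Q₁) (gaussConvDensity_nonneg Q₂)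
    ((integral_gaussConvDensity hσ Q₁).trans (integral_gaussConvDensity hσ Q₂).symm)
    ).trans_eq ?_
  rw [ENNReal.ofReal_mul (by norm_num), ENNReal.ofReal_inv_of_pos two_pos, ENNReal.ofReal_ofNat,
    ofReal_integral_eq_lintegral_ofReal hint.abs (ae_of_all _ fun _ => abs_nonneg _)]

end GaussianSmoothing

section EmpiricalMeasure

variable {Ω : Type*} [MeasurableSpace Ω] {d : ℕ} (X : ℕ → Ω → EuclideanSpace ℝ (Fin d))

theorem isProbabilityMeasure_empMeasure {n : ℕ} (hn : n ≠ 0) (ω : Ω) :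
    IsProbabilityMeasure (empMeasure X n ω) := by
  constructor
  simp [empMeasure, ENNReal.inv_mul_cancel (Nat.cast_ne_zero.2 hn) (ENNReal.natCast_ne_top n)]

theorem integral_empMeasure (n : ℕ) (ω : Ω) (f : EuclideanSpace ℝ (Fin d) → ℝ) :
    ∫ y, f y ∂(empMeasure X n ω) = (n : ℝ)⁻¹ * ∑ i ∈ Finset.range n, f (X i ω) := by
  rw [empMeasure, integral_smul_measure, integral_finsetSum_measure fun i _ =>
    integrable_dirac enorm_lt_top]
  simp [integral_dirac]

theorem lintegral_tvDist_mconv_empMeasure_le {σ : ℝ} (hσ : 0 < σ) (μ : Measure Ω) [SFinite μ]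
    (P : Measure (EuclideanSpace ℝ (Fin d))) [IsProbabilityMeasure P]
    (hmeas : ∀ i, Measurable (X i)) {n : ℕ} (hn : n ≠ 0) :
    ∫⁻ ω, .ofReal (tvDist (mconv (empMeasure X n ω) (gaussMeasure d σ))
        (mconv P (gaussMeasure d σ))) ∂μ
      ≤ 2⁻¹ * ∫⁻ x, ∫⁻ ω, .ofReal |(n : ℝ)⁻¹ * ∑ i ∈ Finset.range n,
          gaussDensity d σ (x - X i ω) - gaussConvDensity d σ P x| ∂μ := by
  have hdev : Measurable (Function.uncurry fun ω x => ENNReal.ofReal |(n : ℝ)⁻¹ *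
      ∑ i ∈ Finset.range n, gaussDensity d σ (x - X i ω) - gaussConvDensity d σ P x|) := by
    fun_prop
  rw [← lintegral_lintegral_swap hdev.aemeasurable, ← lintegral_const_mul' _ _ (by simp)]
  refine lintegral_mono fun ω => ?_
  have := isProbabilityMeasure_empMeasure X hn ω
  simpa only [gaussConvDensity, integral_empMeasure] using
    ofReal_tvDist_mconv_gaussMeasure_le hσ (empMeasure X n ω) P

end EmpiricalMeasure

theorem smooth_tv_moment_bound_general
    {Ω : Type*} [MeasurableSpace Ω] (μ : Measure Ω) [IsProbabilityMeasure μ]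
    (d : ℕ) (σ : ℝ) (hσ : 0 < σ)
    (P : Measure (EuclideanSpace ℝ (Fin d))) [IsProbabilityMeasure P]
    (X : ℕ → Ω → EuclideanSpace ℝ (Fin d))
    (hmeas : ∀ i, Measurable (X i))
    (hindep : iIndepFun X μ)
    (hlaw : ∀ i, μ.map (X i) = P)
    (n : ℕ) (hn : 1 ≤ n) :
    ∫⁻ ω, ENNReal.ofReal (tvDist (mconv (empMeasure X n ω) (gaussMeasure d σ))
        (mconv P (gaussMeasure d σ))) ∂μ
      ≤ ENNReal.ofReal (1 / (2 * Real.sqrt n)) *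
        ∫⁻ x, ENNReal.ofReal
          (Real.sqrt (variance (fun y => gaussDensity d σ (x - y)) P)) := by
  have hn0 : n ≠ 0 := Nat.one_le_iff_ne_zero.1 hn
  calc ∫⁻ ω, ENNReal.ofReal (tvDist (mconv (empMeasure X n ω) (gaussMeasure d σ))
        (mconv P (gaussMeasure d σ))) ∂μ
      ≤ 2⁻¹ * ∫⁻ x, ∫⁻ ω, .ofReal |(n : ℝ)⁻¹ * ∑ i ∈ Finset.range n,
          gaussDensity d σ (x - X i ω) - gaussConvDensity d σ P x| ∂μ :=
        lintegral_tvDist_mconv_empMeasure_le X hσ μ P hmeas hn0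
    _ ≤ 2⁻¹ * ∫⁻ x, ENNReal.ofReal
          (Real.sqrt (variance (fun y => gaussDensity d σ (x - y)) P) / Real.sqrt n) := by
        gcongr with x
        exact lintegral_abs_empiricalMean_sub_le (fun i => ⟨hmeas i, hlaw i⟩) hindep
          (by fun_prop) (memLp_gaussDensity_sub P x 2) hn0
    _ = ENNReal.ofReal (1 / (2 * Real.sqrt n)) *
        ∫⁻ x, ENNReal.ofReal (Real.sqrt (variance (fun y => gaussDensity d σ (x - y)) P)) := by
        simp_rw [div_eq_mul_inv, ENNReal.ofReal_mul (Real.sqrt_nonneg _)]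
        rw [lintegral_mul_const' _ _ ENNReal.ofReal_ne_top, one_mul, mul_inv,
          ENNReal.ofReal_mul (by norm_num), ENNReal.ofReal_inv_of_pos two_pos, ENNReal.ofReal_ofNat]
        ring

/-- **Moment bound for the smooth total variation distance.**
If `∫ √(Var_P(φ_σ(x−·))) dx < ∞`, then
`E[δ_TV(P_n ∗ N_σ, P ∗ N_σ)] ≤ (1/(2√n)) ∫ √(Var_P(φ_σ(x−·))) dx`. -/
theorem smooth_tv_moment_bound
    {Ω : Type*} [MeasurableSpace Ω] (μ : Measure Ω) [IsProbabilityMeasure μ]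
    (d : ℕ) (hd : 1 ≤ d) (σ : ℝ) (hσ : 0 < σ)
    (P : Measure (EuclideanSpace ℝ (Fin d))) [IsProbabilityMeasure P]
    (hP : ∫⁻ x, ENNReal.ofReal
        (Real.sqrt (variance (fun y => gaussDensity d σ (x - y)) P)) < ⊤)
    (X : ℕ → Ω → EuclideanSpace ℝ (Fin d))
    (hmeas : ∀ i, Measurable (X i))
    (hindep : iIndepFun X μ)
    (hlaw : ∀ i, μ.map (X i) = P)
    (n : ℕ) (hn : 1 ≤ n) :
    ∫⁻ ω, ENNReal.ofReal (tvDist (mconv (empMeasure X n ω) (gaussMeasure d σ))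
        (mconv P (gaussMeasure d σ))) ∂μ
      ≤ ENNReal.ofReal (1 / (2 * Real.sqrt n)) *
        ∫⁻ x, ENNReal.ofReal
          (Real.sqrt (variance (fun y => gaussDensity d σ (x - y)) P)) :=
  smooth_tv_moment_bound_general μ d σ hσ P X hmeas hindep hlaw n hn
end

section
/- Let X be a mean-zero ℝ^d-valued random variable that is β-sub-Gaussian, i.e., E[exp(α·X)] ≤ e^{β²‖α‖²/2} for all α ∈ ℝ^d. Then for every η with 0 ≤ η < 1/(2β²), E[e^{η‖X‖²}] ≤ (1 − 2β²η)^{−d/2}. -/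
open MeasureTheory ProbabilityTheory Real Filter
open scoped ENNReal NNReal RealInnerProductSpace

open Finset

/-!
Gaussian linearization of the square: if `G` has i.i.d. `N(0, 2η)` coordinates then
`E_G[exp ⟪G, x⟫] = exp (η ‖x‖²)`. By Tonelli,
`E[exp (η ‖X‖²)] = E_G E_X[exp ⟪G, X⟫] ≤ E_G[exp (β² ‖G‖² / 2)]`, and the last expectation
factors into `d` one-dimensional Gaussian integrals, each equal to `(1 - 2β²η)^(-1/2)`.
-/

theorem lintegral_ofReal_fintype_prod_eq_prod {ι : Type*} [Fintype ι] {E : ι → Type*}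
    [∀ i, MeasurableSpace (E i)] {μ : (i : ι) → Measure (E i)} [∀ i, SigmaFinite (μ i)]
    {g : (i : ι) → E i → ℝ}
    (hg_nonneg : ∀ i a, 0 ≤ g i a) (hg_meas : ∀ i, AEStronglyMeasurable (g i) (μ i))
    (hg_fin : ∀ i, ∫⁻ a, ENNReal.ofReal (g i a) ∂μ i ≠ ∞) :
    ∫⁻ x, ENNReal.ofReal (∏ i, g i (x i)) ∂Measure.pi μ
      = ∏ i, ∫⁻ a, ENNReal.ofReal (g i a) ∂μ i := by
  have hint : ∀ i, Integrable (g i) (μ i) := fun i =>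
    ⟨hg_meas i, (hasFiniteIntegral_iff_ofReal (ae_of_all _ (hg_nonneg i))).2 (hg_fin i).lt_top⟩
  rw [← ofReal_integral_eq_lintegral_ofReal (Integrable.fintype_prod_dep hint)
      (ae_of_all _ fun x => prod_nonneg fun i _ => hg_nonneg i (x i)),
    integral_fintype_prod_eq_prod,
    ENNReal.ofReal_prod_of_nonneg fun i _ => integral_nonneg (hg_nonneg i)]
  exact prod_congr rfl fun i _ =>
    ofReal_integral_eq_lintegral_ofReal (hint i) (ae_of_all _ (hg_nonneg i))

theorem lintegral_exp_mul_gaussianReal (v : ℝ≥0) (t : ℝ) :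
    ∫⁻ a, ENNReal.ofReal (exp (t * a)) ∂gaussianReal 0 v
      = ENNReal.ofReal (exp (v * t ^ 2 / 2)) := by
  rw [← ofReal_integral_eq_lintegral_ofReal (integrable_exp_mul_gaussianReal t)
    (ae_of_all _ fun _ => (exp_pos _).le)]
  simpa [mgf] using congrArg ENNReal.ofReal (congrFun (mgf_id_gaussianReal (μ := 0) (v := v)) t)

theorem gaussianPDFReal_mul_exp_mul_sq {v : ℝ≥0} (hv : v ≠ 0) {c : ℝ} (hc : 2 * v * c < 1)
    (a : ℝ) :
    gaussianPDFReal 0 v a * exp (c * a ^ 2)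
      = (1 - 2 * v * c) ^ (-(1 / 2 : ℝ)) * gaussianPDFReal 0 (v / (1 - 2 * v * c).toNNReal) a := by
  have hs : 0 < 1 - 2 * (v : ℝ) * c := by linarith
  simp only [gaussianPDFReal, NNReal.coe_div, Real.coe_toNNReal _ hs.le, sub_zero]
  rw [rpow_neg hs.le, ← sqrt_eq_rpow, mul_div_assoc', sqrt_div' _ hs.le, mul_assoc, ← exp_add]
  field_simp
  congr 1
  ring

theorem lintegral_exp_mul_sq_gaussianReal (v : ℝ≥0) {c : ℝ} (hc : 2 * v * c < 1) :
    ∫⁻ a, ENNReal.ofReal (exp (c * a ^ 2)) ∂gaussianReal 0 v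
      = ENNReal.ofReal ((1 - 2 * v * c) ^ (-(1 / 2 : ℝ))) := by
  rcases eq_or_ne v 0 with rfl | hv
  · simp [gaussianReal_zero_var]
  have hs : 0 < 1 - 2 * (v : ℝ) * c := by linarith
  have hv' : v / (1 - 2 * v * c).toNNReal ≠ 0 := by positivity
  rw [gaussianReal_of_var_ne_zero 0 hv,
    lintegral_withDensity_eq_lintegral_mul _ (measurable_gaussianPDF 0 v) (by fun_prop)]
  have hdensity : ∀ a, gaussianPDF 0 v a * ENNReal.ofReal (exp (c * a ^ 2))
      = ENNReal.ofReal ((1 - 2 * v * c) ^ (-(1 / 2 : ℝ)))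
        * gaussianPDF 0 (v / (1 - 2 * v * c).toNNReal) a := fun a => by
    rw [gaussianPDF, gaussianPDF, ← ENNReal.ofReal_mul (gaussianPDFReal_nonneg _ _ _),
      gaussianPDFReal_mul_exp_mul_sq hv hc, ENNReal.ofReal_mul (rpow_nonneg hs.le _)]
  simp_rw [Pi.mul_apply, hdensity]
  rw [lintegral_const_mul _ (measurable_gaussianPDF 0 _), lintegral_gaussianPDF_eq_one 0 hv',
    mul_one]

section EuclideanSpace

variable {ι : Type*} [Fintype ι]

theorem lintegral_exp_inner_pi_gaussianReal (v : ℝ≥0) (x : EuclideanSpace ℝ ι) :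
    ∫⁻ g, ENNReal.ofReal (exp ⟪WithLp.toLp 2 g, x⟫) ∂Measure.pi (fun _ : ι => gaussianReal 0 v)
      = ENNReal.ofReal (exp (v * ‖x‖ ^ 2 / 2)) := by
  have hinner : ∀ g : ι → ℝ, ⟪WithLp.toLp 2 g, x⟫ = ∑ i, x i * g i := fun g => by
    simp [PiLp.inner_apply]
  simp_rw [hinner, exp_sum]
  rw [lintegral_ofReal_fintype_prod_eq_prod (fun _ _ => (exp_pos _).le) (fun _ => by fun_prop)
      (fun _ => by simp [lintegral_exp_mul_gaussianReal])]
  simp_rw [lintegral_exp_mul_gaussianReal, EuclideanSpace.real_norm_sq_eq, mul_sum, sum_div,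
    exp_sum]
  rw [ENNReal.ofReal_prod_of_nonneg fun _ _ => (exp_pos _).le]

theorem lintegral_exp_mul_norm_sq_pi_gaussianReal (v : ℝ≥0) {c : ℝ} (hc : 2 * v * c < 1) :
    ∫⁻ g, ENNReal.ofReal (exp (c * ‖WithLp.toLp 2 g‖ ^ 2))
        ∂Measure.pi (fun _ : ι => gaussianReal 0 v)
      = ENNReal.ofReal ((1 - 2 * v * c) ^ (-(Fintype.card ι : ℝ) / 2)) := by
  have hs : 0 < 1 - 2 * (v : ℝ) * c := by linarith
  simp_rw [EuclideanSpace.real_norm_sq_eq, mul_sum, exp_sum]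
  rw [lintegral_ofReal_fintype_prod_eq_prod (g := fun _ a => exp (c * a ^ 2))
      (fun _ _ => (exp_pos _).le) (fun _ => by fun_prop)
      (fun _ => by simp [lintegral_exp_mul_sq_gaussianReal v hc])]
  simp_rw [lintegral_exp_mul_sq_gaussianReal v hc]
  rw [prod_const, card_univ, ← ENNReal.ofReal_pow (rpow_nonneg hs.le _), ← rpow_mul_natCast hs.le]
  ring_nf

end EuclideanSpace

theorem subGaussian_exp_sq_norm_bound_general
    {Ω : Type*} [MeasurableSpace Ω] (μ : Measure Ω) [IsProbabilityMeasure μ]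
    (d : ℕ) (β : ℝ)
    (X : Ω → EuclideanSpace ℝ (Fin d)) (hX : Measurable X)
    (hsub : ∀ α : EuclideanSpace ℝ (Fin d),
      ∫⁻ ω, ENNReal.ofReal (Real.exp ⟪α, X ω⟫) ∂μ
        ≤ ENNReal.ofReal (Real.exp (β ^ 2 * ‖α‖ ^ 2 / 2)))
    (η : ℝ) (hη₀ : 0 ≤ η) (hη₁ : η < 1 / (2 * β ^ 2)) :
    ∫⁻ ω, ENNReal.ofReal (Real.exp (η * ‖X ω‖ ^ 2)) ∂μ
      ≤ ENNReal.ofReal ((1 - 2 * β ^ 2 * η) ^ (-(d : ℝ) / 2)) := by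
  obtain ⟨v, hv_coe⟩ : ∃ v : ℝ≥0, (v : ℝ) = 2 * η := ⟨⟨2 * η, by positivity⟩, rfl⟩
  let ν := Measure.pi fun _ : Fin d => gaussianReal 0 v
  have hv : 2 * v * (β ^ 2 / 2) < 1 := by
    rw [hv_coe]
    rcases (sq_nonneg β).eq_or_lt with hβ | hβ
    · simp [← hβ]
    · rw [lt_div_iff₀ (by positivity)] at hη₁
      linarith
  calc ∫⁻ ω, ENNReal.ofReal (exp (η * ‖X ω‖ ^ 2)) ∂μ
      = ∫⁻ ω, ∫⁻ g, ENNReal.ofReal (exp ⟪WithLp.toLp 2 g, X ω⟫) ∂ν ∂μ := by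
        simp_rw [ν, lintegral_exp_inner_pi_gaussianReal, hv_coe]
        ring_nf
    _ = ∫⁻ g, ∫⁻ ω, ENNReal.ofReal (exp ⟪WithLp.toLp 2 g, X ω⟫) ∂μ ∂ν :=
        lintegral_lintegral_swap (by fun_prop)
    _ ≤ ∫⁻ g, ENNReal.ofReal (exp (β ^ 2 / 2 * ‖WithLp.toLp 2 g‖ ^ 2)) ∂ν :=
        lintegral_mono fun g => (hsub _).trans_eq (by ring_nf)
    _ = ENNReal.ofReal ((1 - 2 * β ^ 2 * η) ^ (-(d : ℝ) / 2)) := by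
        rw [lintegral_exp_mul_norm_sq_pi_gaussianReal v hv, Fintype.card_fin, hv_coe]
        ring_nf

/-- **Sub-Gaussian squared-norm moment bound:** if `X` is mean-zero `β`-sub-Gaussian on `ℝ^d`
then for every `0 ≤ η < 1/(2β²)`, `E[e^{η‖X‖²}] ≤ (1 − 2β²η)^{−d/2}`. -/
theorem subGaussian_exp_sq_norm_bound
    {Ω : Type*} [MeasurableSpace Ω] (μ : Measure Ω) [IsProbabilityMeasure μ]
    (d : ℕ) (hd : 1 ≤ d) (β : ℝ) (hβ : 0 < β)
    (X : Ω → EuclideanSpace ℝ (Fin d)) (hX : Measurable X)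
    (hint : Integrable X μ) (hmean : ∫ ω, X ω ∂μ = 0)
    (hsub : ∀ α : EuclideanSpace ℝ (Fin d),
      ∫⁻ ω, ENNReal.ofReal (Real.exp ⟪α, X ω⟫) ∂μ
        ≤ ENNReal.ofReal (Real.exp (β ^ 2 * ‖α‖ ^ 2 / 2)))
    (η : ℝ) (hη₀ : 0 ≤ η) (hη₁ : η < 1 / (2 * β ^ 2)) :
    ∫⁻ ω, ENNReal.ofReal (Real.exp (η * ‖X ω‖ ^ 2)) ∂μ
      ≤ ENNReal.ofReal ((1 - 2 * β ^ 2 * η) ^ (-(d : ℝ) / 2)) :=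
  subGaussian_exp_sq_norm_bound_general μ d β X hX hsub η hη₀ hη₁
end

section
/- Let d ≥ 1, σ > 0, and let P be a Borel probability measure on ℝ^d that is β-sub-Gaussian for some β < σ/√2. Then ∫_{ℝ^d} Var_P(φ_σ(x−·)) / (P∗φ_σ(x)) dx < ∞. -/
open MeasureTheory ProbabilityTheory Real Filter
open scoped ENNReal NNReal RealInnerProductSpace

/-- A probability measure `P` on `ℝ^d` is `β`-sub-Gaussian if for `X ∼ P`,
`E[exp(α · (X − E[X]))] ≤ e^{β²‖α‖²/2}` for all `α ∈ ℝ^d`. -/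
def IsSubGaussian (d : ℕ) (β : ℝ) (P : Measure (EuclideanSpace ℝ (Fin d))) : Prop :=
  ∀ α : EuclideanSpace ℝ (Fin d),
    ∫⁻ y, ENNReal.ofReal (Real.exp ⟪α, y - ∫ z, z ∂P⟫) ∂P
      ≤ ENNReal.ofReal (Real.exp (β ^ 2 * ‖α‖ ^ 2 / 2))

/-!
With `k = 1/(2σ²)` and `m` the mean of `P`, the density is `φ_σ = c·exp(-k‖·‖²)` and
`φ_σ² = c²·exp(-2k‖·‖²)`, so `Var_P(φ_σ(x-·)) ≤ c² ∫ exp(-2k‖x-y‖²) dP(y)`. The splitting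
`‖x-y‖² ≤ (1+ε)‖x-m‖² + (1+ε⁻¹)‖m-y‖²` bounds `P∗φ_σ(x)` below by a constant times
`exp(-(1+ε)k‖x-m‖²)`. Integrating the resulting bound in `x` first is a Gaussian integral and leaves
`∫ exp(s‖y-m‖²) dP(y)` with `s = 2(1+ε)k/(1-ε)`. Writing `exp(s‖z‖²)` as a Gaussian average of
`exp⟪α, z⟫`, the sub-Gaussian bound on the moment generating function makes this finite once
`2sβ² < 1`, which holds for small `ε` because `4kβ² = 2β²/σ² < 1`.
-/

section GaussianIntegral

variable {V : Type*} [NormedAddCommGroup V] [InnerProductSpace ℝ V] [FiniteDimensional ℝ V]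
  [MeasurableSpace V] [BorelSpace V]

theorem integrable_exp_neg_mul_sq_norm_add_inner {b : ℝ} (hb : 0 < b) (w : V) :
    Integrable fun v : V => rexp (-b * ‖v‖ ^ 2 + ⟪w, v⟫) := by
  refine (GaussianFourier.integrable_cexp_neg_mul_sq_norm_add (b := (b : ℂ)) (by simpa) 1 w).re
    |>.congr (.of_forall fun v => ?_)
  norm_cast
  simp only [one_mul]
  exact Complex.ofReal_re _

theorem integral_exp_neg_mul_sq_norm_add_inner {b : ℝ} (hb : 0 < b) (w : V) :
    ∫ v : V, rexp (-b * ‖v‖ ^ 2 + ⟪w, v⟫) =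
      (π / b) ^ (Module.finrank ℝ V / 2 : ℝ) * rexp (‖w‖ ^ 2 / (4 * b)) := by
  have h := GaussianFourier.integral_cexp_neg_mul_sq_norm_add (b := (b : ℂ)) (by simpa) 1 w
  simp only [one_mul, one_pow] at h
  apply Complex.ofReal_injective
  rw [← integral_complex_ofReal, Complex.ofReal_mul, Complex.ofReal_cpow (by positivity)]
  convert h using 1 <;> push_cast <;> rfl

theorem lintegral_exp_neg_mul_sq_norm_add_inner {b : ℝ} (hb : 0 < b) (w : V) :
    ∫⁻ v : V, ENNReal.ofReal (rexp (-b * ‖v‖ ^ 2 + ⟪w, v⟫)) =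
      ENNReal.ofReal ((π / b) ^ (Module.finrank ℝ V / 2 : ℝ) * rexp (‖w‖ ^ 2 / (4 * b))) := by
  rw [← integral_exp_neg_mul_sq_norm_add_inner hb w, ofReal_integral_eq_lintegral_ofReal
    (integrable_exp_neg_mul_sq_norm_add_inner hb w) (.of_forall fun _ => (exp_pos _).le)]

theorem lintegral_exp_mul_sq_norm_sub_sub_mul_sq_norm_sub {t q : ℝ} (htq : t < q) (m y : V) :
    ∫⁻ x : V, ENNReal.ofReal (rexp (t * ‖x - m‖ ^ 2 - q * ‖x - y‖ ^ 2)) =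
      ENNReal.ofReal ((π / (q - t)) ^ (Module.finrank ℝ V / 2 : ℝ) *
        rexp (t * q / (q - t) * ‖y - m‖ ^ 2)) := by
  have hqt : 0 < q - t := sub_pos.2 htq
  have hexp (u : V) : ENNReal.ofReal (rexp (t * ‖u + m - m‖ ^ 2 - q * ‖u + m - y‖ ^ 2)) =
      ENNReal.ofReal (rexp (-(q - t) * ‖u‖ ^ 2 + ⟪(2 * q) • (y - m), u⟫)) *
        ENNReal.ofReal (rexp (-(q * ‖y - m‖ ^ 2))) := by
    rw [← ENNReal.ofReal_mul (exp_nonneg _), ← Real.exp_add, add_sub_cancel_right,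
      show u + m - y = u - (y - m) by abel, norm_sub_sq_real, real_inner_smul_left,
      real_inner_comm]
    ring_nf
  rw [← lintegral_add_right_eq_self _ m]
  simp only [hexp]
  rw [lintegral_mul_const' _ _ ENNReal.ofReal_ne_top, lintegral_exp_neg_mul_sq_norm_add_inner hqt,
    ← ENNReal.ofReal_mul (by positivity), mul_assoc, ← Real.exp_add]
  congr 3
  rw [norm_smul, mul_pow, Real.norm_eq_abs, sq_abs]
  field_simp
  ring

end GaussianIntegral

theorem norm_add_sq_le_one_add_mul {E : Type*} [SeminormedAddCommGroup E] {ε : ℝ} (hε : 0 < ε)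
    (u v : E) :
    ‖u + v‖ ^ 2 ≤ (1 + ε) * ‖u‖ ^ 2 + (1 + ε⁻¹) * ‖v‖ ^ 2 := by
  have hsq : 0 ≤ ε⁻¹ * (ε * ‖u‖ - ‖v‖) ^ 2 := by positivity
  have hexpand :
      ε⁻¹ * (ε * ‖u‖ - ‖v‖) ^ 2 = ε * ‖u‖ ^ 2 + ε⁻¹ * ‖v‖ ^ 2 - 2 * ‖u‖ * ‖v‖ := by
    field_simp
    ring
  have htri : ‖u + v‖ ^ 2 ≤ (‖u‖ + ‖v‖) ^ 2 := by gcongr; exact norm_add_le u v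
  nlinarith

section GaussianKernel

variable {E : Type*} [SeminormedAddCommGroup E] [MeasurableSpace E] [OpensMeasurableSpace E]

theorem integrable_exp_neg_mul_sq_norm_sub {μ : Measure E} [IsFiniteMeasure μ] {b : ℝ}
    (hb : 0 ≤ b) (x : E) : Integrable (fun y => rexp (-b * ‖x - y‖ ^ 2)) μ := by
  refine .of_bound (Continuous.aestronglyMeasurable (by fun_prop)) 1 (.of_forall fun y => ?_)
  rw [Real.norm_of_nonneg (exp_nonneg _), exp_le_one_iff]
  exact mul_nonpos_of_nonpos_of_nonneg (neg_nonpos.2 hb) (sq_nonneg _)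

theorem exp_mul_integral_le_integral_exp_neg_mul_sq_norm_sub (μ : Measure E) [IsFiniteMeasure μ]
    {k ε : ℝ} (hk : 0 ≤ k) (hε : 0 < ε) (x m : E) :
    rexp (-((1 + ε) * k) * ‖x - m‖ ^ 2) * ∫ y, rexp (-((1 + ε⁻¹) * k) * ‖m - y‖ ^ 2) ∂μ ≤
      ∫ y, rexp (-k * ‖x - y‖ ^ 2) ∂μ := by
  rw [← integral_const_mul]
  refine integral_mono ((integrable_exp_neg_mul_sq_norm_sub (by positivity) m).const_mul _)
    (integrable_exp_neg_mul_sq_norm_sub hk x) fun y => ?_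
  have hsplit := norm_add_sq_le_one_add_mul hε (x - m) (m - y)
  rw [sub_add_sub_cancel] at hsplit
  rw [← Real.exp_add, exp_le_exp]
  nlinarith [mul_le_mul_of_nonneg_left hsplit hk]

theorem variance_mul_exp_neg_mul_sq_norm_sub_le (μ : Measure E) [IsProbabilityMeasure μ]
    (c k : ℝ) (x : E) :
    variance (fun y => c * rexp (-k * ‖x - y‖ ^ 2)) μ ≤
      c ^ 2 * ∫ y, rexp (-(2 * k) * ‖x - y‖ ^ 2) ∂μ := by
  refine (variance_le_expectation_sq (Continuous.aestronglyMeasurable (by fun_prop))).trans_eq ?_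
  rw [← integral_const_mul]
  congr with y
  rw [Pi.pow_apply, mul_pow, ← Real.exp_nat_mul]
  ring_nf

theorem exists_variance_div_integral_le (μ : Measure E) [IsProbabilityMeasure μ] {c k ε : ℝ}
    (hc : 0 < c) (hk : 0 ≤ k) (hε : 0 < ε) (m : E) :
    ∃ C : ℝ≥0, ∀ x, variance (fun y => c * rexp (-k * ‖x - y‖ ^ 2)) μ /
        ∫ y, c * rexp (-k * ‖x - y‖ ^ 2) ∂μ ≤
      C * (rexp ((1 + ε) * k * ‖x - m‖ ^ 2) * ∫ y, rexp (-(2 * k) * ‖x - y‖ ^ 2) ∂μ) := by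
  set A := ∫ y, rexp (-((1 + ε⁻¹) * k) * ‖m - y‖ ^ 2) ∂μ
  have hA : 0 < A := integral_exp_pos (integrable_exp_neg_mul_sq_norm_sub (by positivity) m)
  refine ⟨⟨c / A, by positivity⟩, fun x => ?_⟩
  calc _ ≤ (c ^ 2 * ∫ y, rexp (-(2 * k) * ‖x - y‖ ^ 2) ∂μ) /
        (c * (rexp (-((1 + ε) * k) * ‖x - m‖ ^ 2) * A)) := by
        rw [integral_const_mul]
        exact div_le_div₀ (by positivity) (variance_mul_exp_neg_mul_sq_norm_sub_le μ c k x)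
          (by positivity) (mul_le_mul_of_nonneg_left
            (exp_mul_integral_le_integral_exp_neg_mul_sq_norm_sub μ hk hε x m) hc.le)
    _ = _ := by
      show _ = c / A * _
      rw [neg_mul, Real.exp_neg]
      field_simp

end GaussianKernel

theorem IsSubGaussian.lintegral_exp_mul_sq_norm_sub_lt_top {d : ℕ} {β : ℝ}
    {P : Measure (EuclideanSpace ℝ (Fin d))} [SFinite P] (hsub : IsSubGaussian d β P)
    {s : ℝ} (hs : 0 < s) (hsβ : 2 * s * β ^ 2 < 1) :
    ∫⁻ y, ENNReal.ofReal (rexp (s * ‖y - ∫ z, z ∂P‖ ^ 2)) ∂P < ⊤ := by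
  set m := ∫ z, z ∂P
  set t := (4 * s)⁻¹ with ht_def
  have ht : 0 < t := by positivity
  have htβ : 0 < t - β ^ 2 / 2 := by
    rw [show t - β ^ 2 / 2 = (1 - 2 * s * β ^ 2) / (4 * s) by rw [ht_def]; field_simp; ring]
    exact div_pos (by linarith) (by positivity)
  set C := (π / t) ^ (d / 2 : ℝ)
  -- `exp (s‖z‖²)` is, up to the factor `C`, the Laplace transform of the Gaussian `exp (-t‖α‖²)`.
  have hrepr (z : EuclideanSpace ℝ (Fin d)) :
      ENNReal.ofReal C * ENNReal.ofReal (rexp (s * ‖z‖ ^ 2)) =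
        ∫⁻ α, ENNReal.ofReal (rexp (-t * ‖α‖ ^ 2 + ⟪z, α⟫)) := by
    rw [lintegral_exp_neg_mul_sq_norm_add_inner ht, finrank_euclideanSpace_fin,
      ← ENNReal.ofReal_mul (by positivity)]
    congr 3
    rw [ht_def]
    field_simp
  have hmgf (α : EuclideanSpace ℝ (Fin d)) :
      ∫⁻ y, ENNReal.ofReal (rexp (-t * ‖α‖ ^ 2 + ⟪y - m, α⟫)) ∂P ≤
        ENNReal.ofReal (rexp (-(t - β ^ 2 / 2) * ‖α‖ ^ 2)) := calc
    _ = ENNReal.ofReal (rexp (-t * ‖α‖ ^ 2)) *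
        ∫⁻ y, ENNReal.ofReal (rexp ⟪α, y - m⟫) ∂P := by
      rw [← lintegral_const_mul' _ _ ENNReal.ofReal_ne_top]
      simp only [← ENNReal.ofReal_mul (exp_nonneg _), ← Real.exp_add, real_inner_comm]
    _ ≤ ENNReal.ofReal (rexp (-t * ‖α‖ ^ 2)) * ENNReal.ofReal (rexp (β ^ 2 * ‖α‖ ^ 2 / 2)) :=
      mul_le_mul_right (hsub α) _
    _ = _ := by
      rw [← ENNReal.ofReal_mul (exp_nonneg _), ← Real.exp_add]
      ring_nf
  have hfin : ENNReal.ofReal C * ∫⁻ y, ENNReal.ofReal (rexp (s * ‖y - m‖ ^ 2)) ∂P < ⊤ := calc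
    _ = ∫⁻ y, (∫⁻ α, ENNReal.ofReal (rexp (-t * ‖α‖ ^ 2 + ⟪y - m, α⟫))) ∂P := by
      rw [← lintegral_const_mul' _ _ ENNReal.ofReal_ne_top]
      simp only [hrepr]
    _ = ∫⁻ α, ∫⁻ y, ENNReal.ofReal (rexp (-t * ‖α‖ ^ 2 + ⟪y - m, α⟫)) ∂P :=
      lintegral_lintegral_swap (Measurable.ennreal_ofReal (by fun_prop)).aemeasurable
    _ ≤ ∫⁻ α, ENNReal.ofReal (rexp (-(t - β ^ 2 / 2) * ‖α‖ ^ 2)) := lintegral_mono hmgf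
    _ < ⊤ := by
      simpa using (lintegral_exp_neg_mul_sq_norm_add_inner htβ (0 : EuclideanSpace ℝ (Fin d)))
        |>.trans_lt ENNReal.ofReal_lt_top
  exact ENNReal.lt_top_of_mul_ne_top_right hfin.ne (by positivity)

theorem IsSubGaussian.lintegral_exp_mul_sq_norm_sub_mul_integral_lt_top {d : ℕ} {β : ℝ}
    {P : Measure (EuclideanSpace ℝ (Fin d))} [IsFiniteMeasure P] (hsub : IsSubGaussian d β P)
    {t q : ℝ} (ht : 0 < t) (htq : t < q) (hβ : 2 * β ^ 2 * (t * q) < q - t) :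
    ∫⁻ x, ENNReal.ofReal
      (rexp (t * ‖x - ∫ z, z ∂P‖ ^ 2) * ∫ y, rexp (-q * ‖x - y‖ ^ 2) ∂P) < ⊤ := by
  set m := ∫ z, z ∂P
  have hqt : 0 < q - t := sub_pos.2 htq
  have hs : 0 < t * q / (q - t) := by have := ht.trans htq; positivity
  have hsβ : 2 * (t * q / (q - t)) * β ^ 2 < 1 := by
    rw [mul_div_assoc', div_mul_eq_mul_div, div_lt_one hqt]; linarith
  set K := (π / (q - t)) ^ (d / 2 : ℝ)
  calc _ = ∫⁻ x, ∫⁻ y, ENNReal.ofReal (rexp (t * ‖x - m‖ ^ 2 - q * ‖x - y‖ ^ 2)) ∂P := by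
        refine lintegral_congr fun x => ?_
        rw [ENNReal.ofReal_mul (exp_nonneg _), ofReal_integral_eq_lintegral_ofReal
          (integrable_exp_neg_mul_sq_norm_sub (ht.trans htq).le x)
          (.of_forall fun _ => exp_nonneg _),
          ← lintegral_const_mul' _ _ ENNReal.ofReal_ne_top]
        simp only [← ENNReal.ofReal_mul (exp_nonneg _), ← Real.exp_add, neg_mul, sub_eq_add_neg]
    _ = ∫⁻ y, (∫⁻ x, ENNReal.ofReal (rexp (t * ‖x - m‖ ^ 2 - q * ‖x - y‖ ^ 2))) ∂P :=
        lintegral_lintegral_swap (Measurable.ennreal_ofReal (by fun_prop)).aemeasurable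
    _ = ENNReal.ofReal K * ∫⁻ y, ENNReal.ofReal (rexp (t * q / (q - t) * ‖y - m‖ ^ 2)) ∂P := by
        rw [← lintegral_const_mul' _ _ ENNReal.ofReal_ne_top]
        refine lintegral_congr fun y => ?_
        rw [lintegral_exp_mul_sq_norm_sub_sub_mul_sq_norm_sub htq, finrank_euclideanSpace_fin,
          ENNReal.ofReal_mul (by positivity)]
    _ < ⊤ := ENNReal.mul_lt_top ENNReal.ofReal_lt_top
        (hsub.lintegral_exp_mul_sq_norm_sub_lt_top hs hsβ)

open Topology in
theorem IsSubGaussian.lintegral_variance_div_integral_lt_top {d : ℕ} {β c k : ℝ}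
    {P : Measure (EuclideanSpace ℝ (Fin d))} [IsProbabilityMeasure P] (hsub : IsSubGaussian d β P)
    (hc : 0 < c) (hk : 0 < k) (hβk : 4 * β ^ 2 * k < 1) :
    ∫⁻ x, ENNReal.ofReal (variance (fun y => c * rexp (-k * ‖x - y‖ ^ 2)) P /
      ∫ y, c * rexp (-k * ‖x - y‖ ^ 2) ∂P) < ⊤ := by
  set m := ∫ z, z ∂P
  -- Both constraints on `ε` are open and hold at `ε = 0`.
  obtain ⟨ε, ⟨hεk, hεβ⟩, hε⟩ : ∃ ε, ((1 + ε) * k < 2 * k ∧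
      2 * β ^ 2 * ((1 + ε) * k * (2 * k)) < 2 * k - (1 + ε) * k) ∧ 0 < ε := by
    have h0 : ∀ᶠ ε in 𝓝 (0 : ℝ), (1 + ε) * k < 2 * k ∧
        2 * β ^ 2 * ((1 + ε) * k * (2 * k)) < 2 * k - (1 + ε) * k :=
      (ContinuousAt.eventually_lt (by fun_prop) (by fun_prop) (by linarith)).and
        (ContinuousAt.eventually_lt (by fun_prop) (by fun_prop)
          (by nlinarith [mul_lt_mul_of_pos_right hβk hk]))
    exact ((h0.filter_mono nhdsWithin_le_nhds).and
      (eventually_mem_nhdsWithin (s := Set.Ioi 0))).exists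
  obtain ⟨C, hC⟩ := exists_variance_div_integral_le P hc hk.le hε m
  calc _ ≤ ∫⁻ x, C * ENNReal.ofReal (rexp ((1 + ε) * k * ‖x - m‖ ^ 2) *
          ∫ y, rexp (-(2 * k) * ‖x - y‖ ^ 2) ∂P) :=
        lintegral_mono fun x => (ENNReal.ofReal_le_ofReal (hC x)).trans_eq
          (by rw [ENNReal.ofReal_mul C.coe_nonneg, ENNReal.ofReal_coe_nnreal])
    _ = C * ∫⁻ x, ENNReal.ofReal (rexp ((1 + ε) * k * ‖x - m‖ ^ 2) *
          ∫ y, rexp (-(2 * k) * ‖x - y‖ ^ 2) ∂P) :=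
        lintegral_const_mul' _ _ ENNReal.coe_ne_top
    _ < ⊤ := ENNReal.mul_lt_top ENNReal.coe_lt_top
        (hsub.lintegral_exp_mul_sq_norm_sub_mul_integral_lt_top (by positivity) hεk hεβ)

theorem chiSq_condition_of_subGaussian_general
    (d : ℕ) (σ : ℝ) (β : ℝ) (hβ : 0 < β)
    (hβσ : β < σ / Real.sqrt 2)
    (P : Measure (EuclideanSpace ℝ (Fin d))) [IsProbabilityMeasure P]
    (hsub : IsSubGaussian d β P) :
    ∫⁻ x, ENNReal.ofReal
        (variance (fun y => gaussDensity d σ (x - y)) P / ∫ y, gaussDensity d σ (x - y) ∂P)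
      < ⊤ := by
  have h2β : 2 * β ^ 2 < σ ^ 2 := by
    have := (lt_div_iff₀ (by positivity)).1 hβσ
    nlinarith [sq_sqrt (zero_le_two : (0 : ℝ) ≤ 2), mul_pos hβ (sqrt_pos.2 two_pos)]
  have hσ : 0 < 2 * σ ^ 2 := by nlinarith
  have hφ : gaussDensity d σ = fun v =>
      (2 * π * σ ^ 2) ^ (-(d : ℝ) / 2) * rexp (-(2 * σ ^ 2)⁻¹ * ‖v‖ ^ 2) := by
    ext v
    rw [gaussDensity]
    congr 2
    ring
  simp only [hφ]
  refine hsub.lintegral_variance_div_integral_lt_top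
    (rpow_pos_of_pos (by rw [mul_right_comm]; exact mul_pos hσ pi_pos) _) (inv_pos.2 hσ) ?_
  rw [← div_eq_mul_inv, div_lt_one hσ]
  linarith

/-- **Sufficient condition for the χ² integrability condition:** if `P` is `β`-sub-Gaussian
with `β < σ/√2`, then `∫ Var_P(φ_σ(x−·)) / (P∗φ_σ(x)) dx < ∞`. -/
theorem chiSq_condition_of_subGaussian
    (d : ℕ) (hd : 1 ≤ d) (σ : ℝ) (hσ : 0 < σ) (β : ℝ) (hβ : 0 < β)
    (hβσ : β < σ / Real.sqrt 2)
    (P : Measure (EuclideanSpace ℝ (Fin d))) [IsProbabilityMeasure P]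
    (hsub : IsSubGaussian d β P) :
    ∫⁻ x, ENNReal.ofReal
        (variance (fun y => gaussDensity d σ (x - y)) P / ∫ y, gaussDensity d σ (x - y) ∂P)
      < ⊤ :=
  chiSq_condition_of_subGaussian_general d σ β hβ hβσ P hsub
end

section
/- Let d ≥ 1, σ > 0, and let P be a Gaussian probability measure on ℝ^d with covariance matrix Σ whose maximum and minimum eigenvalues λ_max, λ_min satisfy λ_max < λ_min + σ²/2. Then ∫_{ℝ^d} Var_P(φ_σ(x−·)) / (P∗φ_σ(x)) dx < ∞. -/
open MeasureTheory ProbabilityTheory Real Filter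
open scoped ENNReal NNReal RealInnerProductSpace

/-!
Along an orthonormal eigenbasis `bᵢ` of `S` (eigenvalues `λᵢ`), the characteristic functions show
that `P` is the law of `m + ∑ Zᵢ bᵢ` with independent `Zᵢ ∼ N(0, λᵢ)`. Hence the Gaussian kernel
`exp (-‖x - y‖² / 2t)` integrates against `P` to a product of one-dimensional Gaussian integrals,
`∏ √(t / (t + λᵢ)) exp (-cᵢ² / 2(t + λᵢ))` with `cᵢ = ⟪bᵢ, x - m⟫`. The variance is at most the
second moment, and `φ_σ²` is a multiple of the kernel with `t = σ² / 2`. So the integrand is at most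
a constant times `exp (-‖x - m‖² / (σ² + 2λ_max)) / exp (-‖x - m‖² / 2(σ² + λ_min))`, which is a
Gaussian in `x - m` precisely because `λ_max < λ_min + σ²/2`.
-/

lemma Matrix.IsHermitian.dotProduct_mulVec_eq_sum_eigenvalues {n : Type*} [Fintype n]
    [DecidableEq n] {A : Matrix n n ℝ} (hA : A.IsHermitian) (x : EuclideanSpace ℝ n) :
    dotProduct x.ofLp (A.mulVec x.ofLp) =
      ∑ i, hA.eigenvalues i * ⟪hA.eigenvectorBasis i, x⟫ ^ 2 := by
  have hAx : A.mulVec x.ofLp =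
      ∑ i, (⟪hA.eigenvectorBasis i, x⟫ * hA.eigenvalues i) • ⇑(hA.eigenvectorBasis i) := by
    conv_lhs => rw [← hA.eigenvectorBasis.sum_repr' x]
    simp [Matrix.mulVec_sum, Matrix.mulVec_smul, hA.mulVec_eigenvectorBasis, smul_smul]
  rw [hAx, dotProduct_sum]
  refine Finset.sum_congr rfl fun i _ => ?_
  rw [dotProduct_smul, smul_eq_mul, ← star_trivial (hA.eigenvectorBasis i).ofLp,
    ← EuclideanSpace.inner_eq_star_dotProduct]
  ring

namespace OrthonormalBasis

variable {ι E : Type*} [Fintype ι] [NormedAddCommGroup E] [InnerProductSpace ℝ E]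
  (b : OrthonormalBasis ι ℝ E) {s : ι → ℝ}

lemma prod_exp_neg_sq_inner_div_eq (w : E) :
    ∏ i, rexp (-⟪b i, w⟫ ^ 2 / (2 * s i)) = rexp (-∑ i, ⟪b i, w⟫ ^ 2 / (2 * s i)) := by
  rw [← Real.exp_sum, ← Finset.sum_neg_distrib]
  simp only [neg_div]

lemma prod_exp_neg_sq_inner_div_le {M : ℝ} (hs : ∀ i, 0 < s i) (hM : ∀ i, s i ≤ M) (w : E) :
    ∏ i, rexp (-⟪b i, w⟫ ^ 2 / (2 * s i)) ≤ rexp (-‖w‖ ^ 2 / (2 * M)) := by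
  rw [prod_exp_neg_sq_inner_div_eq, exp_le_exp, neg_div, neg_le_neg_iff, ← b.sum_sq_inner_right,
    Finset.sum_div]
  gcongr with i
  exacts [by linarith [hs i], hM i]

lemma exp_neg_sq_norm_div_le_prod {μ : ℝ} (hμ : 0 < μ) (hs : ∀ i, μ ≤ s i) (w : E) :
    rexp (-‖w‖ ^ 2 / (2 * μ)) ≤ ∏ i, rexp (-⟪b i, w⟫ ^ 2 / (2 * s i)) := by
  rw [prod_exp_neg_sq_inner_div_eq, exp_le_exp, neg_div, neg_le_neg_iff, ← b.sum_sq_inner_right,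
    Finset.sum_div]
  gcongr with i
  exact hs i

end OrthonormalBasis

namespace ProbabilityTheory

lemma integral_exp_neg_sq_sub_div_gaussianReal {t : ℝ} (ht : 0 < t) (v : ℝ≥0) (c : ℝ) :
    ∫ z, rexp (-(c - z) ^ 2 / (2 * t)) ∂gaussianReal 0 v =
      √(t / (t + v)) * rexp (-c ^ 2 / (2 * (t + v))) := by
  rcases eq_or_ne v 0 with rfl | hv
  · simp [gaussianReal_zero_var, integral_dirac, div_self ht.ne']
  have hv0 : (0 : ℝ) < v := by positivity
  set a := (t + v) / (2 * t * v)
  -- complete the square in `z`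
  have hsq : ∀ z, gaussianPDFReal 0 v z • rexp (-(c - z) ^ 2 / (2 * t)) =
      (√(2 * π * v))⁻¹ * rexp (-c ^ 2 / (2 * (t + v))) *
        rexp (-a * (z - v * c / (t + v)) ^ 2) := by
    intro z
    simp only [gaussianPDFReal, smul_eq_mul, mul_assoc, ← Real.exp_add]
    congr 2
    simp only [a]
    field_simp
    ring
  simp_rw [integral_gaussianReal_eq_integral_smul hv, hsq]
  rw [integral_const_mul, integral_sub_right_eq_self (fun z => rexp (-a * z ^ 2)),
    integral_gaussian]
  have hπa : π / a = (2 * π * v) * (t / (t + v)) := by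
    simp only [a]
    field_simp
  have hs : √(2 * π * v) ≠ 0 := by positivity
  rw [hπa, Real.sqrt_mul (by positivity) (t / (t + v))]
  field_simp

variable {ι E : Type*} [Fintype ι] [NormedAddCommGroup E] [InnerProductSpace ℝ E]
  [MeasurableSpace E] [BorelSpace E]

/-- The Gaussian measure with mean `m` and covariance `∑ i, v i • (b i ⊗ b i)`. -/
noncomputable def gaussianOfEigenbasis (m : E) (b : OrthonormalBasis ι ℝ E) (v : ι → ℝ≥0) :
    Measure E :=
  (Measure.pi fun i => gaussianReal 0 (v i)).map fun z => m + ∑ i, z i • b i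

variable (m : E) (b : OrthonormalBasis ι ℝ E) (v : ι → ℝ≥0)

instance : IsProbabilityMeasure (gaussianOfEigenbasis m b v) :=
  Measure.isProbabilityMeasure_map (Continuous.aemeasurable (by fun_prop))

lemma integral_gaussianOfEigenbasis {F : Type*} [NormedAddCommGroup F] [NormedSpace ℝ F]
    [SecondCountableTopology F] {f : E → F} (hf : Continuous f) :
    ∫ y, f y ∂gaussianOfEigenbasis m b v =
      ∫ z, f (m + ∑ i, z i • b i) ∂Measure.pi fun i => gaussianReal 0 (v i) :=
  integral_map (Continuous.aemeasurable (by fun_prop)) hf.aestronglyMeasurable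

open Complex in
lemma charFun_gaussianOfEigenbasis (t : E) :
    charFun (gaussianOfEigenbasis m b v) t =
      cexp (⟪m, t⟫ * I - ((∑ i, (v i : ℝ) * ⟪b i, t⟫ ^ 2 : ℝ) : ℂ) / 2) := by
  have hsplit : ∀ z : ι → ℝ, cexp (⟪m + ∑ i, z i • b i, t⟫ * I) =
      cexp (⟪m, t⟫ * I) * ∏ i, cexp (⟪b i, t⟫ * z i * I) := by
    intro z
    simp only [inner_add_left, sum_inner, real_inner_smul_left, ofReal_add, ofReal_sum,
      ofReal_mul, add_mul, Finset.sum_mul, Complex.exp_add, Complex.exp_sum, mul_comm (z _ : ℂ)]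
  rw [charFun_apply, integral_gaussianOfEigenbasis _ _ _ (by fun_prop)]
  simp_rw [hsplit]
  rw [integral_const_mul,
    integral_fintype_prod_eq_prod (f := fun i (x : ℝ) => cexp (⟪b i, t⟫ * x * I))]
  simp_rw [← charFun_apply_real, charFun_gaussianReal, ← Complex.exp_sum, ← Complex.exp_add]
  congr 1
  push_cast
  rw [sub_eq_add_neg, Finset.sum_div, ← Finset.sum_neg_distrib]
  simp

lemma integral_exp_neg_sq_norm_sub_div_gaussianOfEigenbasis {t : ℝ} (ht : 0 < t) (x : E) :
    ∫ y, rexp (-‖x - y‖ ^ 2 / (2 * t)) ∂gaussianOfEigenbasis m b v =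
      ∏ i, √(t / (t + v i)) * rexp (-⟪b i, x - m⟫ ^ 2 / (2 * (t + v i))) := by
  have hsplit : ∀ z : ι → ℝ, rexp (-‖x - (m + ∑ i, z i • b i)‖ ^ 2 / (2 * t)) =
      ∏ i, rexp (-(⟪b i, x - m⟫ - z i) ^ 2 / (2 * t)) := by
    intro z
    rw [← Real.exp_sum, ← b.sum_sq_inner_right, neg_div, Finset.sum_div,
      ← Finset.sum_neg_distrib]
    congr 1
    refine Finset.sum_congr rfl fun i _ => ?_
    rw [sub_add_eq_sub_sub, inner_sub_right _ _ (∑ j, z j • b j),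
      b.orthonormal.inner_right_fintype, neg_div]
  rw [integral_gaussianOfEigenbasis _ _ _ (by fun_prop)]
  simp_rw [hsplit]
  rw [integral_fintype_prod_eq_prod
    (f := fun i (z : ℝ) => rexp (-(⟪b i, x - m⟫ - z) ^ 2 / (2 * t)))]
  exact Finset.prod_congr rfl fun i _ => integral_exp_neg_sq_sub_div_gaussianReal ht (v i) _

lemma integral_exp_neg_sq_norm_sub_div_gaussianOfEigenbasis_le {t M : ℝ} (ht : 0 < t)
    (hM : ∀ i, v i ≤ M) (x : E) :
    ∫ y, rexp (-‖x - y‖ ^ 2 / (2 * t)) ∂gaussianOfEigenbasis m b v ≤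
      rexp (-‖x - m‖ ^ 2 / (2 * (t + M))) := by
  rw [integral_exp_neg_sq_norm_sub_div_gaussianOfEigenbasis m b v ht, Finset.prod_mul_distrib]
  refine (mul_le_of_le_one_left (by positivity) ?_).trans ?_
  · exact Finset.prod_le_one (fun i _ => sqrt_nonneg _)
      fun i _ => sqrt_le_one.mpr (div_le_one_of_le₀ (by simp) (by positivity))
  · exact b.prod_exp_neg_sq_inner_div_le (fun i => by positivity)
      (fun i => by linarith [hM i]) (x - m)

lemma le_integral_exp_neg_sq_norm_sub_div_gaussianOfEigenbasis {t μ M : ℝ} (ht : 0 < t)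
    (hμ : 0 ≤ μ) (hμv : ∀ i, μ ≤ v i) (hM : ∀ i, v i ≤ M) (x : E) :
    √(t / (t + M)) ^ Fintype.card ι * rexp (-‖x - m‖ ^ 2 / (2 * (t + μ))) ≤
      ∫ y, rexp (-‖x - y‖ ^ 2 / (2 * t)) ∂gaussianOfEigenbasis m b v := by
  rw [integral_exp_neg_sq_norm_sub_div_gaussianOfEigenbasis m b v ht, Finset.prod_mul_distrib,
    ← Finset.card_univ, ← Finset.prod_const]
  gcongr with i
  · linarith [hM i]
  · exact b.exp_neg_sq_norm_div_le_prod (by positivity) (fun i => by linarith [hμv i]) (x - m)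

lemma eq_gaussianOfEigenbasis_of_map_inner {n : Type*} [Fintype n] [DecidableEq n]
    {P : Measure (EuclideanSpace ℝ n)} [IsProbabilityMeasure P] {m : EuclideanSpace ℝ n}
    {S : Matrix n n ℝ} (hS : S.PosSemidef)
    (hP : ∀ α : EuclideanSpace ℝ n, P.map (fun y => ⟪α, y⟫) = gaussianReal ⟪α, m⟫
      (Real.toNNReal (dotProduct (WithLp.equiv 2 (n → ℝ) α)
        (S.mulVec (WithLp.equiv 2 (n → ℝ) α))))) :
    P = gaussianOfEigenbasis m hS.1.eigenvectorBasis fun i => (hS.1.eigenvalues i).toNNReal := by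
  refine Measure.ext_of_charFun (funext fun α => ?_)
  have hq : 0 ≤ dotProduct α.ofLp (S.mulVec α.ofLp) := hS.dotProduct_mulVec_nonneg α.ofLp
  rw [charFun_eq_charFunDual_toDualMap, charFunDual_eq_charFun_map_one]
  change charFun (P.map fun y => ⟪α, y⟫) 1 = _
  rw [hP α, charFun_gaussianReal, charFun_gaussianOfEigenbasis, WithLp.equiv_apply,
    Real.coe_toNNReal _ hq, hS.1.dotProduct_mulVec_eq_sum_eigenvalues, real_inner_comm α m]
  simp [Real.coe_toNNReal _ (hS.eigenvalues_nonneg _)]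

end ProbabilityTheory

section GaussDensity

variable {d : ℕ} {σ : ℝ}

lemma integral_gaussDensity_sub (P : Measure (EuclideanSpace ℝ (Fin d)))
    (x : EuclideanSpace ℝ (Fin d)) :
    ∫ y, gaussDensity d σ (x - y) ∂P =
      (2 * π * σ ^ 2) ^ (-(d : ℝ) / 2) * ∫ y, rexp (-‖x - y‖ ^ 2 / (2 * σ ^ 2)) ∂P :=
  integral_const_mul _ _

lemma variance_gaussDensity_sub_le (P : Measure (EuclideanSpace ℝ (Fin d)))
    [IsProbabilityMeasure P] (x : EuclideanSpace ℝ (Fin d)) :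
    variance (fun y => gaussDensity d σ (x - y)) P ≤
      ((2 * π * σ ^ 2) ^ (-(d : ℝ) / 2)) ^ 2 * ∫ y, rexp (-‖x - y‖ ^ 2 / σ ^ 2) ∂P := by
  have hcont : Continuous fun y => gaussDensity d σ (x - y) := by
    unfold gaussDensity
    fun_prop
  rw [← integral_const_mul]
  refine (variance_le_expectation_sq hcont.aestronglyMeasurable).trans_eq
    (integral_congr_ae (Eventually.of_forall fun y => ?_))
  simp only [Pi.pow_apply, gaussDensity, mul_pow, sq (rexp _), ← Real.exp_add]
  ring_nf

lemma variance_div_integral_gaussDensity_sub_le {ι : Type*} [Fintype ι]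
    (m : EuclideanSpace ℝ (Fin d)) (b : OrthonormalBasis ι ℝ (EuclideanSpace ℝ (Fin d)))
    (v : ι → ℝ≥0) (hσ : 0 < σ) {μ M : ℝ} (hμ : 0 ≤ μ) (hM : 0 ≤ M) (hμv : ∀ i, μ ≤ v i)
    (hvM : ∀ i, v i ≤ M) (x : EuclideanSpace ℝ (Fin d)) :
    variance (fun y => gaussDensity d σ (x - y)) (gaussianOfEigenbasis m b v) /
        ∫ y, gaussDensity d σ (x - y) ∂gaussianOfEigenbasis m b v ≤
      (2 * π * σ ^ 2) ^ (-(d : ℝ) / 2) / √(σ ^ 2 / (σ ^ 2 + M)) ^ Fintype.card ι *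
        rexp (-((σ ^ 2 + 2 * M)⁻¹ - (2 * (σ ^ 2 + μ))⁻¹) * ‖x - m‖ ^ 2) := by
  set G := gaussianOfEigenbasis m b v
  set K := (2 * π * σ ^ 2) ^ (-(d : ℝ) / 2)
  set A := √(σ ^ 2 / (σ ^ 2 + M)) ^ Fintype.card ι
  have hK : 0 < K := by positivity
  have hA : 0 < A := by positivity
  have hden : K * (A * rexp (-‖x - m‖ ^ 2 / (2 * (σ ^ 2 + μ)))) ≤
      ∫ y, gaussDensity d σ (x - y) ∂G := by
    rw [integral_gaussDensity_sub]
    gcongr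
    exact le_integral_exp_neg_sq_norm_sub_div_gaussianOfEigenbasis m b v (by positivity) hμ hμv
      hvM x
  have hnum : variance (fun y => gaussDensity d σ (x - y)) G ≤
      K ^ 2 * rexp (-‖x - m‖ ^ 2 / (σ ^ 2 + 2 * M)) := by
    refine (variance_gaussDensity_sub_le G x).trans ?_
    gcongr
    have ht : 2 * (σ ^ 2 / 2) = σ ^ 2 := by ring
    have htM : 2 * (σ ^ 2 / 2 + M) = σ ^ 2 + 2 * M := by ring
    have := integral_exp_neg_sq_norm_sub_div_gaussianOfEigenbasis_le m b v
      (t := σ ^ 2 / 2) (by positivity) hvM x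
    rwa [ht, htM] at this
  rw [div_le_iff₀ (lt_of_lt_of_le (by positivity) hden)]
  refine hnum.trans (le_of_eq_of_le ?_ (mul_le_mul_of_nonneg_left hden (by positivity)))
  have hexp : rexp (-‖x - m‖ ^ 2 / (σ ^ 2 + 2 * M)) =
      rexp (-((σ ^ 2 + 2 * M)⁻¹ - (2 * (σ ^ 2 + μ))⁻¹) * ‖x - m‖ ^ 2) *
        rexp (-‖x - m‖ ^ 2 / (2 * (σ ^ 2 + μ))) := by
    rw [← Real.exp_add]
    congr 1
    field_simp
    ring
  rw [hexp]
  field_simp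

end GaussDensity

lemma lintegral_ofReal_mul_exp_neg_mul_sq_norm_sub_lt_top {V : Type*} [NormedAddCommGroup V]
    [InnerProductSpace ℝ V] [FiniteDimensional ℝ V] [MeasurableSpace V] [BorelSpace V]
    (C : ℝ) {ε : ℝ} (hε : 0 < ε) (m : V) :
    ∫⁻ x, ENNReal.ofReal (C * rexp (-ε * ‖x - m‖ ^ 2)) < ∞ := by
  have hint : Integrable fun x : V => rexp (-ε * ‖x‖ ^ 2) :=
    Integrable.of_integral_ne_zero
      (by rw [GaussianFourier.integral_rexp_neg_mul_sq_norm hε]; positivity)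
  rw [lintegral_sub_right_eq_self (fun x => ENNReal.ofReal (C * rexp (-ε * ‖x‖ ^ 2))) m]
  exact (hint.const_mul C).lintegral_lt_top

theorem chiSq_condition_of_gaussian_general
    (d : ℕ) (σ : ℝ) (hσ : 0 < σ)
    (P : Measure (EuclideanSpace ℝ (Fin d))) [IsProbabilityMeasure P]
    (m : EuclideanSpace ℝ (Fin d)) (S : Matrix (Fin d) (Fin d) ℝ)
    (hS : S.PosSemidef)
    (hGauss : ∀ α : EuclideanSpace ℝ (Fin d),
      P.map (fun y => ⟪α, y⟫) = gaussianReal ⟪α, m⟫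
        (Real.toNNReal (dotProduct (WithLp.equiv 2 (Fin d → ℝ) α)
          (S.mulVec (WithLp.equiv 2 (Fin d → ℝ) α)))))
    (heig : (⨆ i, hS.1.eigenvalues i) < (⨅ i, hS.1.eigenvalues i) + σ ^ 2 / 2) :
    ∫⁻ x, ENNReal.ofReal
        (variance (fun y => gaussDensity d σ (x - y)) P / ∫ y, gaussDensity d σ (x - y) ∂P)
      < ⊤ := by
  obtain rfl := eq_gaussianOfEigenbasis_of_map_inner hS hGauss
  set L := hS.1.eigenvalues
  have hv : ∀ i, ((L i).toNNReal : ℝ) = L i := fun i =>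
    Real.coe_toNNReal _ (hS.eigenvalues_nonneg i)
  have hμ : 0 ≤ ⨅ i, L i := Real.iInf_nonneg hS.eigenvalues_nonneg
  have hM : 0 ≤ ⨆ i, L i := Real.iSup_nonneg hS.eigenvalues_nonneg
  have hε : 0 < (σ ^ 2 + 2 * ⨆ i, L i)⁻¹ - (2 * (σ ^ 2 + ⨅ i, L i))⁻¹ :=
    sub_pos.mpr (inv_strictAnti₀ (by positivity) (by linarith))
  have hbound := variance_div_integral_gaussDensity_sub_le m hS.1.eigenvectorBasis _ hσ hμ hM
    (fun i => (ciInf_le (Set.finite_range L).bddBelow i).trans (hv i).ge)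
    (fun i => (hv i).le.trans (le_ciSup (Set.finite_range L).bddAbove i))
  exact (lintegral_mono fun x => ENNReal.ofReal_le_ofReal (hbound x)).trans_lt
    (lintegral_ofReal_mul_exp_neg_mul_sq_norm_sub_lt_top _ hε m)

/-- **χ² integrability condition for Gaussian `P`:** if `P` is a Gaussian measure on `ℝ^d`
with covariance matrix `S` whose eigenvalues satisfy `λ_max < λ_min + σ²/2`, then
`∫ Var_P(φ_σ(x−·))/(P∗φ_σ(x)) dx < ∞`. -/
theorem chiSq_condition_of_gaussian
    (d : ℕ) (hd : 1 ≤ d) (σ : ℝ) (hσ : 0 < σ)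
    (P : Measure (EuclideanSpace ℝ (Fin d))) [IsProbabilityMeasure P]
    (m : EuclideanSpace ℝ (Fin d)) (S : Matrix (Fin d) (Fin d) ℝ)
    (hS : S.PosSemidef)
    (hGauss : ∀ α : EuclideanSpace ℝ (Fin d),
      P.map (fun y => ⟪α, y⟫) = gaussianReal ⟪α, m⟫
        (Real.toNNReal (dotProduct (WithLp.equiv 2 (Fin d → ℝ) α)
          (S.mulVec (WithLp.equiv 2 (Fin d → ℝ) α)))))
    (heig : (⨆ i, hS.1.eigenvalues i) < (⨅ i, hS.1.eigenvalues i) + σ ^ 2 / 2) :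
    ∫⁻ x, ENNReal.ofReal
        (variance (fun y => gaussDensity d σ (x - y)) P / ∫ y, gaussDensity d σ (x - y) ∂P)
      < ⊤ :=
  chiSq_condition_of_gaussian_general d σ hσ P m S hS hGauss heig
end

section
/- Let d ≥ 1, σ > 0, and let P be a Borel probability measure on ℝ^d with X ~ P. Then for every x ∈ ℝ^d, Var_P(φ_σ(x−·)) ≤ (2πσ²)^{−d} ( e^{−‖x‖²/(4σ²)} + P(‖X‖ > ‖x‖/2) ). -/
/-! Bound the variance by the second moment. Squaring `φ_σ(x - y)` gives `(2πσ²)^{-d}` times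
`exp(-‖x - y‖²/σ²)`, and the exponential is at most `exp(-‖x‖²/(4σ²))` when `‖y‖ ≤ ‖x‖/2`
(then `‖x - y‖ ≥ ‖x‖/2`) and at most `1` otherwise. -/

open MeasureTheory ProbabilityTheory Real Filter
open scoped ENNReal NNReal

theorem variance_le_integral_of_sq_le {Ω : Type*} [MeasurableSpace Ω] {μ : Measure Ω}
    [IsProbabilityMeasure μ] {f g : Ω → ℝ} (hf : AEStronglyMeasurable f μ) (hg : Integrable g μ)
    (hfg : ∀ ω, f ω ^ 2 ≤ g ω) : variance f μ ≤ ∫ ω, g ω ∂μ := by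
  have hf2 : Integrable (fun ω => f ω ^ 2) μ :=
    hg.mono' (hf.pow 2) (ae_of_all _ fun ω => by
      simpa only [Real.norm_eq_abs, abs_of_nonneg (sq_nonneg (f ω))] using hfg ω)
  calc variance f μ ≤ ∫ ω, f ω ^ 2 ∂μ := by simpa using variance_le_expectation_sq hf
    _ ≤ ∫ ω, g ω ∂μ := integral_mono hf2 hg hfg

theorem exp_neg_sq_norm_sub_div_le {E : Type*} [SeminormedAddCommGroup E] (x y : E) {s : ℝ}
    (hs : 0 ≤ s) :
    exp (-‖x - y‖ ^ 2 / s)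
      ≤ exp (-‖x‖ ^ 2 / (4 * s)) + {y : E | ‖y‖ > ‖x‖ / 2}.indicator 1 y := by
  by_cases hy : ‖y‖ > ‖x‖ / 2
  · have hle_one : exp (-‖x - y‖ ^ 2 / s) ≤ 1 :=
      exp_le_one_iff.2 (div_nonpos_of_nonpos_of_nonneg (neg_nonpos.2 (sq_nonneg _)) hs)
    rw [Set.indicator_of_mem (show y ∈ {y : E | ‖y‖ > ‖x‖ / 2} from hy), Pi.one_apply]
    linarith [exp_pos (-‖x‖ ^ 2 / (4 * s))]
  · rw [Set.indicator_of_notMem (show y ∉ {y : E | ‖y‖ > ‖x‖ / 2} from hy), add_zero]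
    have hhalf : ‖x‖ / 2 ≤ ‖x - y‖ := by linarith [norm_sub_norm_le x y, not_lt.1 hy]
    have hsq : ‖x‖ ^ 2 / 4 ≤ ‖x - y‖ ^ 2 := by
      nlinarith [pow_le_pow_left₀ (by positivity) hhalf 2]
    refine exp_le_exp.2 ?_
    rw [neg_div, neg_div, neg_le_neg_iff, ← div_div]
    exact div_le_div_of_nonneg_right hsq hs

theorem gaussDensity_sq (d : ℕ) {σ : ℝ} (hσ : σ ≠ 0) (z : EuclideanSpace ℝ (Fin d)) :
    gaussDensity d σ z ^ 2 = (2 * π * σ ^ 2) ^ (-(d : ℝ)) * exp (-‖z‖ ^ 2 / σ ^ 2) := by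
  have hbase : 0 < 2 * π * σ ^ 2 := by positivity
  rw [gaussDensity, mul_pow, ← rpow_natCast, ← rpow_mul hbase.le, ← exp_nat_mul]
  congr 2
  · push_cast; ring
  · field_simp; ring

theorem gaussDensity_sub_sq_le (d : ℕ) {σ : ℝ} (hσ : σ ≠ 0) (x y : EuclideanSpace ℝ (Fin d)) :
    gaussDensity d σ (x - y) ^ 2
      ≤ (2 * π * σ ^ 2) ^ (-(d : ℝ)) *
        (exp (-‖x‖ ^ 2 / (4 * σ ^ 2)) + {y | ‖y‖ > ‖x‖ / 2}.indicator 1 y) := by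
  rw [gaussDensity_sq d hσ]
  exact mul_le_mul_of_nonneg_left (exp_neg_sq_norm_sub_div_le x y (sq_nonneg σ))
    (rpow_nonneg (by positivity) _)

theorem variance_gaussDensity_pointwise_bound_general
    (d : ℕ) (σ : ℝ) (hσ : 0 < σ)
    (P : Measure (EuclideanSpace ℝ (Fin d))) [IsProbabilityMeasure P]
    (x : EuclideanSpace ℝ (Fin d)) :
    variance (fun y => gaussDensity d σ (x - y)) P
      ≤ (2 * π * σ ^ 2) ^ (-(d : ℝ)) *
        (Real.exp (-‖x‖ ^ 2 / (4 * σ ^ 2)) + (P {y | ‖y‖ > ‖x‖ / 2}).toReal) := by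
  set A : Set (EuclideanSpace ℝ (Fin d)) := {y | ‖y‖ > ‖x‖ / 2}
  have hA : MeasurableSet A := measurableSet_lt measurable_const measurable_norm
  have hcont : Continuous fun y => gaussDensity d σ (x - y) := by
    unfold gaussDensity; fun_prop
  have hind : Integrable (A.indicator 1) P :=
    (integrable_indicator_iff hA).2 (integrableOn_const (C := (1 : ℝ)))
  have hint : Integrable (fun y => exp (-‖x‖ ^ 2 / (4 * σ ^ 2)) + A.indicator 1 y) P :=
    (integrable_const _).add hind
  calc variance (fun y => gaussDensity d σ (x - y)) P
      ≤ ∫ y, (2 * π * σ ^ 2) ^ (-(d : ℝ)) * (exp (-‖x‖ ^ 2 / (4 * σ ^ 2)) + A.indicator 1 y) ∂P :=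
        variance_le_integral_of_sq_le hcont.aestronglyMeasurable (hint.const_mul _)
          (gaussDensity_sub_sq_le d hσ.ne' x)
    _ = (2 * π * σ ^ 2) ^ (-(d : ℝ)) * (exp (-‖x‖ ^ 2 / (4 * σ ^ 2)) + (P A).toReal) := by
        rw [integral_const_mul, integral_add (integrable_const _) hind, integral_const,
          integral_indicator_one hA]
        simp [measureReal_def]

/-- **Pointwise variance bound:**
`Var_P(φ_σ(x−·)) ≤ (2πσ²)^{−d} (e^{−‖x‖²/(4σ²)} + P(‖X‖ > ‖x‖/2))`. -/
theorem variance_gaussDensity_pointwise_bound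
    (d : ℕ) (hd : 1 ≤ d) (σ : ℝ) (hσ : 0 < σ)
    (P : Measure (EuclideanSpace ℝ (Fin d))) [IsProbabilityMeasure P]
    (x : EuclideanSpace ℝ (Fin d)) :
    variance (fun y => gaussDensity d σ (x - y)) P
      ≤ (2 * π * σ ^ 2) ^ (-(d : ℝ)) *
        (Real.exp (-‖x‖ ^ 2 / (4 * σ ^ 2)) + (P {y | ‖y‖ > ‖x‖ / 2}).toReal) :=
  variance_gaussDensity_pointwise_bound_general d σ hσ P x
end
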